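/- arXiv:1412.0540 — 9 statements merged into one kernel-verified Lean document; each statement's English description precedes it below -/
import Mathlib

section
/- In any intersection representation of the claw K_{1,3} by unit intervals, the interval assigned to the center must be a closed interval, and the interval assigned to the middle leaf (the leaf whose interval shares the position of the center's interval) must be an open interval. -/
open Set

def IsUnitCC (I : Set ℝ) : Prop := ∃ x : ℝ, I = Set.Icc x (x + 1)
def IsUnitOO (I : Set ℝ) : Prop := ∃ x : ℝ, I = Set.Ioo x (x + 1)
def IsUnitCO (I : Set ℝ) : Prop := ∃ x : ℝ, I = Set.Ico x (x + 1)
def IsUnitOC (I : Set ℝ) : Prop := ∃ x : ℝ, I = Set.Ioc x (x + 1)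
def IsUnitInterval (I : Set ℝ) : Prop := IsUnitCC I ∨ IsUnitOO I ∨ IsUnitCO I ∨ IsUnitOC I

def IsRep {V : Type*} (G : SimpleGraph V) (f : V → Set ℝ) : Prop :=
  ∀ u v : V, u ≠ v → (G.Adj u v ↔ (f u ∩ f v).Nonempty)

def MixedUIG {V : Type*} (G : SimpleGraph V) : Prop :=
  ∃ f : V → Set ℝ, IsRep G f ∧ ∀ v, IsUnitInterval (f v)

def AlmostMixedUIG {V : Type*} (G : SimpleGraph V) : Prop :=
  ∃ f : V → Set ℝ, IsRep G f ∧ ∀ v, IsUnitCC (f v) ∨ IsUnitOO (f v) ∨ IsUnitCO (f v)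

def TwinFree {V : Type*} (G : SimpleGraph V) : Prop :=
  ∀ u v : V, insert u (G.neighborSet u) = insert v (G.neighborSet v) → u = v


lemma unit_inf {I : Set ℝ} (h : IsUnitInterval I) :
    Ioo (sInf I) (sInf I + 1) ⊆ I ∧ I ⊆ Icc (sInf I) (sInf I + 1) := by
  rcases h with ⟨x, rfl⟩ | ⟨x, rfl⟩ | ⟨x, rfl⟩ | ⟨x, rfl⟩
  · rw [csInf_Icc (by linarith : x ≤ x + 1)]
    exact ⟨Ioo_subset_Icc_self, subset_rfl⟩
  · rw [csInf_Ioo (by linarith : x < x + 1)]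
    exact ⟨subset_rfl, Ioo_subset_Icc_self⟩
  · rw [csInf_Ico (by linarith : x < x + 1)]
    exact ⟨Ioo_subset_Ico_self, Ico_subset_Icc_self⟩
  · rw [csInf_Ioc (by linarith : x < x + 1)]
    exact ⟨Ioo_subset_Ioc_self, Ioc_subset_Icc_self⟩

lemma near {I J : Set ℝ} {x y : ℝ} (hI : I ⊆ Icc x (x+1)) (hJ : J ⊆ Icc y (y+1))
    (h : (I ∩ J).Nonempty) : y - 1 ≤ x ∧ x ≤ y + 1 := by
  obtain ⟨t, h1, h2⟩ := h
  have e1 := hI h1; have e2 := hJ h2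
  exact ⟨by linarith [e1.1, e1.2, e2.1, e2.2], by linarith [e1.1, e1.2, e2.1, e2.2]⟩

lemma far {I J : Set ℝ} {x y : ℝ} (hI : Ioo x (x+1) ⊆ I) (hJ : Ioo y (y+1) ⊆ J)
    (h : I ∩ J = ∅) : x + 1 ≤ y ∨ y + 1 ≤ x := by
  by_contra hcon
  push_neg at hcon
  obtain ⟨h1, h2⟩ := hcon
  rcases le_total x y with hxy | hxy
  · have ht : (y + (x+1))/2 ∈ I ∩ J :=
      ⟨hI ⟨by linarith, by linarith⟩, hJ ⟨by linarith, by linarith⟩⟩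
    rw [h] at ht; exact ht
  · have ht : (x + (y+1))/2 ∈ I ∩ J :=
      ⟨hI ⟨by linarith, by linarith⟩, hJ ⟨by linarith, by linarith⟩⟩
    rw [h] at ht; exact ht

lemma left_pt {Ic J : Set ℝ} {c x : ℝ} (hcU : Ic ⊆ Icc c (c+1)) (hJU : J ⊆ Icc x (x+1))
    (hx : x = c - 1) (h : (Ic ∩ J).Nonempty) : c ∈ Ic ∧ c ∈ J := by
  obtain ⟨t, h1, h2⟩ := h
  have e1 := hcU h1; have e2 := hJU h2
  have htc : t = c := by
    have h3 := e2.2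
    rw [hx] at h3
    linarith [e1.1]
  rw [htc] at h1 h2
  exact ⟨h1, h2⟩

lemma right_pt {Ic J : Set ℝ} {c x : ℝ} (hcU : Ic ⊆ Icc c (c+1)) (hJU : J ⊆ Icc x (x+1))
    (hx : x = c + 1) (h : (Ic ∩ J).Nonempty) : c + 1 ∈ Ic ∧ c + 1 ∈ J := by
  obtain ⟨t, h1, h2⟩ := h
  have e1 := hcU h1; have e2 := hJU h2
  have htc : t = c + 1 := by
    have h3 := e2.1
    rw [hx] at h3
    linarith [e1.2]
  rw [htc] at h1 h2
  exact ⟨h1, h2⟩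

lemma perm3 {a b d c : ℝ} (ha1 : c-1 ≤ a) (ha2 : a ≤ c+1)
    (hb1 : c-1 ≤ b) (hb2 : b ≤ c+1) (hd1 : c-1 ≤ d) (hd2 : d ≤ c+1)
    (hab : a+1 ≤ b ∨ b+1 ≤ a) (had : a+1 ≤ d ∨ d+1 ≤ a) (hbd : b+1 ≤ d ∨ d+1 ≤ b) :
    (a = c-1 ∨ b = c-1 ∨ d = c-1) ∧ (a = c+1 ∨ b = c+1 ∨ d = c+1) := by
  rcases hab with h1|h1 <;> rcases had with h2|h2 <;> rcases hbd with h3|h3 <;>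
    refine ⟨?_, ?_⟩ <;>
    first
    | (left; linarith)
    | (right; left; linarith)
    | (right; right; linarith)

lemma mid3 {b d c : ℝ} (hb1 : c-1 ≤ b) (hb2 : b ≤ c+1) (hd1 : c-1 ≤ d) (hd2 : d ≤ c+1)
    (hab : c+1 ≤ b ∨ b+1 ≤ c) (had : c+1 ≤ d ∨ d+1 ≤ c) (hbd : b+1 ≤ d ∨ d+1 ≤ b) :
    (b = c-1 ∧ d = c+1) ∨ (b = c+1 ∧ d = c-1) := by
  rcases hab with h1|h1 <;> rcases had with h2|h2 <;> rcases hbd with h3|h3 <;>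
    first
    | (left; exact ⟨by linarith, by linarith⟩)
    | (right; exact ⟨by linarith, by linarith⟩)

lemma unit_cc {I : Set ℝ} (h : IsUnitInterval I) (h1 : sInf I ∈ I) (h2 : sInf I + 1 ∈ I) :
    IsUnitCC I := by
  rcases h with hI | ⟨x, rfl⟩ | ⟨x, rfl⟩ | ⟨x, rfl⟩
  · exact hI
  · rw [csInf_Ioo (by linarith : x < x + 1)] at h1
    exact absurd h1.1 (lt_irrefl x)
  · rw [csInf_Ico (by linarith : x < x + 1)] at h2
    exact absurd h2.2 (lt_irrefl _)
  · rw [csInf_Ioc (by linarith : x < x + 1)] at h1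
    exact absurd h1.1 (lt_irrefl x)

lemma unit_oo {I : Set ℝ} (h : IsUnitInterval I) (h1 : sInf I ∉ I) (h2 : sInf I + 1 ∉ I) :
    IsUnitOO I := by
  rcases h with ⟨x, rfl⟩ | hI | ⟨x, rfl⟩ | ⟨x, rfl⟩
  · rw [csInf_Icc (by linarith : x ≤ x + 1)] at h1
    exact absurd ⟨le_refl x, by linarith⟩ h1
  · exact hI
  · rw [csInf_Ico (by linarith : x < x + 1)] at h1
    exact absurd ⟨le_refl x, by linarith⟩ h1
  · rw [csInf_Ioc (by linarith : x < x + 1)] at h2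
    exact absurd ⟨by linarith, le_refl (x+1)⟩ h2

lemma middle_core {Ic J K L : Set ℝ} {c k l : ℝ} (hJ : IsUnitInterval J)
    (hcU : Ic ⊆ Icc c (c+1)) (hKU : K ⊆ Icc k (k+1)) (hLU : L ⊆ Icc l (l+1))
    (hinfJ : sInf J = c) (hk : k = c-1) (hl : l = c+1)
    (hcK : (Ic ∩ K).Nonempty) (hcL : (Ic ∩ L).Nonempty)
    (hJK : J ∩ K = ∅) (hJL : J ∩ L = ∅) : IsUnitOO J := by
  obtain ⟨-, hcK'⟩ := left_pt hcU hKU hk hcK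
  obtain ⟨-, hcL'⟩ := right_pt hcU hLU hl hcL
  apply unit_oo hJ
  · rw [hinfJ]; intro hmem
    have : c ∈ J ∩ K := ⟨hmem, hcK'⟩
    rw [hJK] at this; exact this
  · rw [hinfJ]; intro hmem
    have : c + 1 ∈ J ∩ L := ⟨hmem, hcL'⟩
    rw [hJL] at this; exact this

theorem stmt2 (Ic Ia Ib Id : Set ℝ)
    (hc : IsUnitInterval Ic) (ha : IsUnitInterval Ia)
    (hb : IsUnitInterval Ib) (hd : IsUnitInterval Id)
    (hca : (Ic ∩ Ia).Nonempty) (hcb : (Ic ∩ Ib).Nonempty) (hcd : (Ic ∩ Id).Nonempty)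
    (hab : Ia ∩ Ib = ∅) (had : Ia ∩ Id = ∅) (hbd : Ib ∩ Id = ∅) :
    IsUnitCC Ic ∧
    (sInf Ia = sInf Ic → IsUnitOO Ia) ∧
    (sInf Ib = sInf Ic → IsUnitOO Ib) ∧
    (sInf Id = sInf Ic → IsUnitOO Id) := by
  obtain ⟨hcL, hcU⟩ := unit_inf hc
  obtain ⟨haL, haU⟩ := unit_inf ha
  obtain ⟨hbL, hbU⟩ := unit_inf hb
  obtain ⟨hdL, hdU⟩ := unit_inf hd
  set c := sInf Ic
  set a := sInf Ia
  set b := sInf Ib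
  set d := sInf Id
  obtain ⟨na1, na2⟩ := near hcU haU hca
  obtain ⟨nb1, nb2⟩ := near hcU hbU hcb
  obtain ⟨nd1, nd2⟩ := near hcU hdU hcd
  have ha1 : c - 1 ≤ a := by linarith
  have ha2 : a ≤ c + 1 := by linarith
  have hb1 : c - 1 ≤ b := by linarith
  have hb2 : b ≤ c + 1 := by linarith
  have hd1 : c - 1 ≤ d := by linarith
  have hd2 : d ≤ c + 1 := by linarith
  have fab := far haL hbL hab
  have fad := far haL hdL had
  have fbd := far hbL hdL hbd
  have hba : Ib ∩ Ia = ∅ := by rw [inter_comm]; exact hab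
  have hda : Id ∩ Ia = ∅ := by rw [inter_comm]; exact had
  have hdb : Id ∩ Ib = ∅ := by rw [inter_comm]; exact hbd
  obtain ⟨hlo, hhi⟩ := perm3 ha1 ha2 hb1 hb2 hd1 hd2 fab fad fbd
  have hcmem : c ∈ Ic := by
    rcases hlo with e|e|e
    · exact (left_pt hcU haU e hca).1
    · exact (left_pt hcU hbU e hcb).1
    · exact (left_pt hcU hdU e hcd).1
  have hcmem1 : c + 1 ∈ Ic := by
    rcases hhi with e|e|e
    · exact (right_pt hcU haU e hca).1
    · exact (right_pt hcU hbU e hcb).1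
    · exact (right_pt hcU hdU e hcd).1
  refine ⟨unit_cc hc hcmem hcmem1, ?_, ?_, ?_⟩
  · intro hinf
    have h1 : c+1 ≤ b ∨ b+1 ≤ c := by
      rcases fab with h|h
      · left; linarith
      · right; linarith
    have h2 : c+1 ≤ d ∨ d+1 ≤ c := by
      rcases fad with h|h
      · left; linarith
      · right; linarith
    rcases mid3 hb1 hb2 hd1 hd2 h1 h2 fbd with ⟨eb, ed⟩ | ⟨eb, ed⟩
    · exact middle_core ha hcU hbU hdU hinf eb ed hcb hcd hab had
    · exact middle_core ha hcU hdU hbU hinf ed eb hcd hcb had hab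
  · intro hinf
    have h1 : c+1 ≤ a ∨ a+1 ≤ c := by
      rcases fab with h|h
      · right; linarith
      · left; linarith
    have h2 : c+1 ≤ d ∨ d+1 ≤ c := by
      rcases fbd with h|h
      · left; linarith
      · right; linarith
    rcases mid3 ha1 ha2 hd1 hd2 h1 h2 fad with ⟨ea, ed⟩ | ⟨ea, ed⟩
    · exact middle_core hb hcU haU hdU hinf ea ed hca hcd hba hbd
    · exact middle_core hb hcU hdU haU hinf ed ea hcd hca hbd hba
  · intro hinf
    have h1 : c+1 ≤ a ∨ a+1 ≤ c := by
      rcases fad with h|h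
      · right; linarith
      · left; linarith
    have h2 : c+1 ≤ b ∨ b+1 ≤ c := by
      rcases fbd with h|h
      · right; linarith
      · left; linarith
    rcases mid3 ha1 ha2 hb1 hb2 h1 h2 fab with ⟨ea, eb⟩ | ⟨ea, eb⟩
    · exact middle_core hd hcU haU hbU hinf ea eb hca hcb hda hdb
    · exact middle_core hd hcU hbU haU hinf eb ea hcb hca hdb hda
end

section
/- The claw K_{1,3} has no intersection representation in which every vertex is assigned a unit interval that is either closed, closed-open, or open-closed (i.e., no open intervals are used). -/
open Set

lemma props_of (I : Set ℝ) (h : IsUnitCC I ∨ IsUnitCO I ∨ IsUnitOC I) :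
    ∃ x : ℝ, I ⊆ Set.Icc x (x + 1) ∧ Set.Ioo x (x + 1) ⊆ I ∧ (x ∉ I → x + 1 ∈ I) := by
  rcases h with ⟨x, rfl⟩ | ⟨x, rfl⟩ | ⟨x, rfl⟩ <;> refine ⟨x, ?_, ?_, ?_⟩
  · exact subset_rfl
  · exact Ioo_subset_Icc_self
  · intro _; exact ⟨by linarith, by linarith⟩
  · exact Ico_subset_Icc_self
  · exact Ioo_subset_Ico_self
  · intro h; exact absurd ⟨le_refl x, by linarith⟩ h
  · exact Ioc_subset_Icc_self
  · exact Ioo_subset_Ioc_self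
  · intro _; exact ⟨by linarith, le_refl _⟩

lemma core (C A B D : Set ℝ) (c a b d : ℝ)
    (hC1 : C ⊆ Set.Icc c (c + 1))
    (hA1 : A ⊆ Set.Icc a (a + 1)) (hA2 : Set.Ioo a (a + 1) ⊆ A)
    (hB1 : B ⊆ Set.Icc b (b + 1)) (hB2 : Set.Ioo b (b + 1) ⊆ B)
    (hB3 : b ∉ B → b + 1 ∈ B)
    (hD1 : D ⊆ Set.Icc d (d + 1)) (hD2 : Set.Ioo d (d + 1) ⊆ D)
    (hab : a ≤ b) (hbd : b ≤ d)
    (hCA : (C ∩ A).Nonempty) (hCD : (C ∩ D).Nonempty)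
    (hAB : A ∩ B = ∅) (hBD : B ∩ D = ∅) : False := by
  obtain ⟨t, htC, htA⟩ := hCA
  obtain ⟨s, hsC, hsD⟩ := hCD
  obtain ⟨htc1, htc2⟩ := hC1 htC
  obtain ⟨hta1, hta2⟩ := hA1 htA
  obtain ⟨hsc1, hsc2⟩ := hC1 hsC
  obtain ⟨hsd1, hsd2⟩ := hD1 hsD
  -- disjointness forces gaps
  have hab1 : a + 1 ≤ b := by
    by_contra h
    push_neg at h
    have hm : (a + 1 + b) / 2 ∈ A ∩ B :=
      ⟨hA2 ⟨by linarith, by linarith⟩, hB2 ⟨by linarith, by linarith⟩⟩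
    rw [hAB] at hm; exact hm
  have hbd1 : b + 1 ≤ d := by
    by_contra h
    push_neg at h
    have hm : (b + 1 + d) / 2 ∈ B ∩ D :=
      ⟨hB2 ⟨by linarith, by linarith⟩, hD2 ⟨by linarith, by linarith⟩⟩
    rw [hBD] at hm; exact hm
  have hbc : b = c := by linarith
  have hdc : d = c + 1 := by linarith
  have htc : t = c := by linarith
  have hsc : s = c + 1 := by linarith
  have hcA : c ∈ A := htc ▸ htA
  have hcB : c ∉ B := fun h => by
    have : c ∈ A ∩ B := ⟨hcA, h⟩
    rw [hAB] at this; exact this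
  have hc1B : c + 1 ∈ B := by
    have := hB3 (hbc ▸ hcB)
    rwa [hbc] at this
  have hc1D : c + 1 ∈ D := hsc ▸ hsD
  have : c + 1 ∈ B ∩ D := ⟨hc1B, hc1D⟩
  rw [hBD] at this; exact this

theorem stmt3 :
    ¬ ∃ Ic Ia Ib Id : Set ℝ,
      (IsUnitCC Ic ∨ IsUnitCO Ic ∨ IsUnitOC Ic) ∧
      (IsUnitCC Ia ∨ IsUnitCO Ia ∨ IsUnitOC Ia) ∧
      (IsUnitCC Ib ∨ IsUnitCO Ib ∨ IsUnitOC Ib) ∧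
      (IsUnitCC Id ∨ IsUnitCO Id ∨ IsUnitOC Id) ∧
      (Ic ∩ Ia).Nonempty ∧ (Ic ∩ Ib).Nonempty ∧ (Ic ∩ Id).Nonempty ∧
      Ia ∩ Ib = ∅ ∧ Ia ∩ Id = ∅ ∧ Ib ∩ Id = ∅ := by
  rintro ⟨Ic, Ia, Ib, Id, hc, ha, hb, hd, hca, hcb, hcd, hab, had, hbd⟩
  obtain ⟨c, hc1, hc2, hc3⟩ := props_of Ic hc
  obtain ⟨a, ha1, ha2, ha3⟩ := props_of Ia ha
  obtain ⟨b, hb1, hb2, hb3⟩ := props_of Ib hb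
  obtain ⟨d, hd1, hd2, hd3⟩ := props_of Id hd
  have hab' : Ib ∩ Ia = ∅ := by rw [Set.inter_comm]; exact hab
  have had' : Id ∩ Ia = ∅ := by rw [Set.inter_comm]; exact had
  have hbd' : Id ∩ Ib = ∅ := by rw [Set.inter_comm]; exact hbd
  rcases le_total a b with h1 | h1 <;> rcases le_total b d with h2 | h2 <;>
    rcases le_total a d with h3 | h3
  · exact core Ic Ia Ib Id c a b d hc1 ha1 ha2 hb1 hb2 hb3 hd1 hd2 h1 h2 hca hcd hab hbd
  · exact core Ic Ia Ib Id c a b d hc1 ha1 ha2 hb1 hb2 hb3 hd1 hd2 h1 h2 hca hcd hab hbd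
  · exact core Ic Ia Id Ib c a d b hc1 ha1 ha2 hd1 hd2 hd3 hb1 hb2 h3 h2 hca hcb had hbd'
  · exact core Ic Id Ia Ib c d a b hc1 hd1 hd2 ha1 ha2 ha3 hb1 hb2 h3 h1 hcd hcb had' hab
  · exact core Ic Ib Ia Id c b a d hc1 hb1 hb2 ha1 ha2 ha3 hd1 hd2 h1 h3 hcb hcd hab' had
  · exact core Ic Ib Id Ia c b d a hc1 hb1 hb2 hd1 hd2 hd3 ha1 ha2 h2 h3 hcb hca hbd had'
  · exact core Ic Id Ib Ia c d b a hc1 hd1 hd2 hb1 hb2 hb3 ha1 ha2 h2 h1 hcd hca hbd' hab'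
  · exact core Ic Id Ib Ia c d b a hc1 hd1 hd2 hb1 hb2 hb3 ha1 ha2 h2 h1 hcd hca hbd' hab'
end

section
/- The claw K_{1,3} has no intersection representation in which every vertex is assigned a unit interval that is either open, closed-open, or open-closed (i.e., no closed intervals are used). -/
open Set

lemma sub_props {I : Set ℝ} (h : IsUnitOO I ∨ IsUnitCO I ∨ IsUnitOC I) :
    ∃ x, Set.Ioo x (x+1) ⊆ I ∧ I ⊆ Set.Icc x (x+1) ∧
      (I = Set.Ioo x (x+1) ∨ I = Set.Ico x (x+1) ∨ I = Set.Ioc x (x+1)) := by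
  rcases h with ⟨x, rfl⟩ | ⟨x, rfl⟩ | ⟨x, rfl⟩
  · exact ⟨x, subset_rfl, Set.Ioo_subset_Icc_self, Or.inl rfl⟩
  · exact ⟨x, Set.Ioo_subset_Ico_self, Set.Ico_subset_Icc_self, Or.inr (Or.inl rfl)⟩
  · exact ⟨x, Set.Ioo_subset_Ioc_self, Set.Ioc_subset_Icc_self, Or.inr (Or.inr rfl)⟩

lemma dis {I J : Set ℝ} {x y : ℝ} (hx : Set.Ioo x (x+1) ⊆ I) (hy : Set.Ioo y (y+1) ⊆ J)
    (h : I ∩ J = ∅) (hxy : x ≤ y) : x + 1 ≤ y := by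
  by_contra hlt
  push_neg at hlt
  have ht : ((y + (x+1))/2) ∈ I ∩ J := by
    constructor
    · exact hx ⟨by linarith, by linarith⟩
    · exact hy ⟨by linarith, by linarith⟩
  rw [h] at ht
  exact ht

lemma core_s4 {Ic Ia Id : Set ℝ} {xc : ℝ}
    (hc : Ic = Set.Ioo xc (xc+1) ∨ Ic = Set.Ico xc (xc+1) ∨ Ic = Set.Ioc xc (xc+1))
    (hIa : Ia ⊆ Set.Icc (xc-1) xc) (hId : Id ⊆ Set.Icc (xc+1) (xc+2))
    (h1 : (Ic ∩ Ia).Nonempty) (h2 : (Ic ∩ Id).Nonempty) : False := by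
  obtain ⟨p, hpc, hpa⟩ := h1
  obtain ⟨q, hqc, hqd⟩ := h2
  obtain ⟨hpa1, hpa2⟩ := hIa hpa
  obtain ⟨hqd1, hqd2⟩ := hId hqd
  rcases hc with rfl | rfl | rfl
  · exact absurd hpc.1 (by linarith)
  · exact absurd hqc.2 (by linarith)
  · exact absurd hpc.1 (by linarith)

lemma final {Ic Iu Iv : Set ℝ} {xc xu xv : ℝ}
    (hc : Ic = Set.Ioo xc (xc+1) ∨ Ic = Set.Ico xc (xc+1) ∨ Ic = Set.Ioc xc (xc+1))
    (hu : Iu ⊆ Set.Icc xu (xu+1)) (hv : Iv ⊆ Set.Icc xv (xv+1))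
    (eu : xu = xc - 1) (ev : xv = xc + 1)
    (h1 : (Ic ∩ Iu).Nonempty) (h2 : (Ic ∩ Iv).Nonempty) : False := by
  subst eu; subst ev
  have e1 : xc - 1 + 1 = xc := by ring
  have e2 : xc + 1 + 1 = xc + 2 := by ring
  rw [e1] at hu
  rw [e2] at hv
  exact core_s4 hc hu hv h1 h2

theorem stmt4 :
    ¬ ∃ Ic Ia Ib Id : Set ℝ,
      (IsUnitOO Ic ∨ IsUnitCO Ic ∨ IsUnitOC Ic) ∧
      (IsUnitOO Ia ∨ IsUnitCO Ia ∨ IsUnitOC Ia) ∧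
      (IsUnitOO Ib ∨ IsUnitCO Ib ∨ IsUnitOC Ib) ∧
      (IsUnitOO Id ∨ IsUnitCO Id ∨ IsUnitOC Id) ∧
      (Ic ∩ Ia).Nonempty ∧ (Ic ∩ Ib).Nonempty ∧ (Ic ∩ Id).Nonempty ∧
      Ia ∩ Ib = ∅ ∧ Ia ∩ Id = ∅ ∧ Ib ∩ Id = ∅ := by
  rintro ⟨Ic, Ia, Ib, Id, hc, ha, hb, hd, hca, hcb, hcd, hab, had, hbd⟩
  obtain ⟨xc, hc_oo, hc_cc, hc_ty⟩ := sub_props hc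
  obtain ⟨xa, ha_oo, ha_cc, -⟩ := sub_props ha
  obtain ⟨xb, hb_oo, hb_cc, -⟩ := sub_props hb
  obtain ⟨xd, hd_oo, hd_cc, -⟩ := sub_props hd
  -- intersection bounds
  obtain ⟨p, hp1, hp2⟩ := hca
  obtain ⟨hpc1, hpc2⟩ := hc_cc hp1
  obtain ⟨hpa1, hpa2⟩ := ha_cc hp2
  obtain ⟨q, hq1, hq2⟩ := hcb
  obtain ⟨hqc1, hqc2⟩ := hc_cc hq1
  obtain ⟨hqb1, hqb2⟩ := hb_cc hq2
  obtain ⟨r, hr1, hr2⟩ := hcd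
  obtain ⟨hrc1, hrc2⟩ := hc_cc hr1
  obtain ⟨hrd1, hrd2⟩ := hd_cc hr2
  have hca' : (Ic ∩ Ia).Nonempty := ⟨p, hp1, hp2⟩
  have hcb' : (Ic ∩ Ib).Nonempty := ⟨q, hq1, hq2⟩
  have hcd' : (Ic ∩ Id).Nonempty := ⟨r, hr1, hr2⟩
  -- disjointness bounds
  have Hab : xa + 1 ≤ xb ∨ xb + 1 ≤ xa := by
    rcases le_total xa xb with h | h
    · exact Or.inl (dis ha_oo hb_oo hab h)
    · exact Or.inr (dis hb_oo ha_oo (by rwa [Set.inter_comm]) h)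
  have Had : xa + 1 ≤ xd ∨ xd + 1 ≤ xa := by
    rcases le_total xa xd with h | h
    · exact Or.inl (dis ha_oo hd_oo had h)
    · exact Or.inr (dis hd_oo ha_oo (by rwa [Set.inter_comm]) h)
  have Hbd : xb + 1 ≤ xd ∨ xd + 1 ≤ xb := by
    rcases le_total xb xd with h | h
    · exact Or.inl (dis hb_oo hd_oo hbd h)
    · exact Or.inr (dis hd_oo hb_oo (by rwa [Set.inter_comm]) h)
  rcases Hab with h1 | h1 <;> rcases Had with h2 | h2 <;> rcases Hbd with h3 | h3
  · exact final hc_ty ha_cc hd_cc (by linarith) (by linarith) hca' hcd'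
  · exact final hc_ty ha_cc hb_cc (by linarith) (by linarith) hca' hcb'
  · linarith
  · exact final hc_ty hd_cc hb_cc (by linarith) (by linarith) hcd' hcb'
  · exact final hc_ty hb_cc hd_cc (by linarith) (by linarith) hcb' hcd'
  · linarith
  · exact final hc_ty hb_cc ha_cc (by linarith) (by linarith) hcb' hca'
  · exact final hc_ty hd_cc ha_cc (by linarith) (by linarith) hcd' hca'
end

section
/- The class of graphs representable by closed and closed-open unit intervals equals the class of graphs representable by closed unit intervals alone. That is, every graph having an intersection representation using only closed and closed-open unit intervals also has one using only closed unit intervals. -/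
open Set

private lemma sMono {a b : ℝ} (hab : a < b) : a / (1 + |a|) < b / (1 + |b|) := by
  have ha : (0:ℝ) < 1 + |a| := by positivity
  have hb : (0:ℝ) < 1 + |b| := by positivity
  rw [div_lt_div_iff₀ ha hb]
  rcases abs_cases a with ⟨h1,h2⟩|⟨h1,h2⟩ <;> rcases abs_cases b with ⟨h3,h4⟩|⟨h3,h4⟩ <;>
    nlinarith

private lemma sBound (a : ℝ) : |a / (1 + |a|)| < 1 := by
  have ha : (0:ℝ) < 1 + |a| := by positivity
  rw [abs_div, abs_of_pos ha, div_lt_one ha]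
  linarith [abs_nonneg a]

private lemma mixed_inter (a b : ℝ) (p q : Prop) [Decidable p] [Decidable q] :
    ((if p then Icc a (a+1) else Ico a (a+1)) ∩
      (if q then Icc b (b+1) else Ico b (b+1))).Nonempty ↔
    ((if p then b ≤ a + 1 else b < a + 1) ∧ (if q then a ≤ b + 1 else a < b + 1)) := by
  split_ifs with hp hq hq
  · constructor
    · rintro ⟨z, hz⟩
      simp only [mem_inter_iff, mem_Icc] at hz
      exact ⟨by linarith [hz.1.2, hz.2.1], by linarith [hz.2.2, hz.1.1]⟩
    · rintro ⟨h1, h2⟩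
      exact ⟨max a b, ⟨le_max_left _ _, max_le (by linarith) h1⟩,
        ⟨le_max_right _ _, max_le h2 (by linarith)⟩⟩
  · constructor
    · rintro ⟨z, hz⟩
      simp only [mem_inter_iff, mem_Icc, mem_Ico] at hz
      exact ⟨by linarith [hz.1.2, hz.2.1], by linarith [hz.2.2, hz.1.1]⟩
    · rintro ⟨h1, h2⟩
      exact ⟨max a b, ⟨le_max_left _ _, max_le (by linarith) h1⟩,
        ⟨le_max_right _ _, max_lt h2 (by linarith)⟩⟩
  · constructor
    · rintro ⟨z, hz⟩
      simp only [mem_inter_iff, mem_Icc, mem_Ico] at hz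
      exact ⟨by linarith [hz.1.2, hz.2.1], by linarith [hz.2.2, hz.1.1]⟩
    · rintro ⟨h1, h2⟩
      exact ⟨max a b, ⟨le_max_left _ _, max_lt (by linarith) h1⟩,
        ⟨le_max_right _ _, max_le h2 (by linarith)⟩⟩
  · constructor
    · rintro ⟨z, hz⟩
      simp only [mem_inter_iff, mem_Ico] at hz
      exact ⟨by linarith [hz.1.2, hz.2.1], by linarith [hz.2.2, hz.1.1]⟩
    · rintro ⟨h1, h2⟩
      exact ⟨max a b, ⟨le_max_left _ _, max_lt (by linarith) h1⟩,
        ⟨le_max_right _ _, max_lt h2 (by linarith)⟩⟩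

private lemma icc_inter (a b : ℝ) :
    (Icc a (a+1) ∩ Icc b (b+1)).Nonempty ↔ b ≤ a + 1 ∧ a ≤ b + 1 := by
  simpa using mixed_inter a b True True

theorem stmt5 {V : Type*} [Fintype V] (G : SimpleGraph V)
    (h : ∃ f : V → Set ℝ, IsRep G f ∧ ∀ v, IsUnitCC (f v) ∨ IsUnitCO (f v)) :
    ∃ g : V → Set ℝ, IsRep G g ∧ ∀ v, IsUnitCC (g v) := by
  classical
  obtain ⟨f, hrep, hform⟩ := h
  have hx : ∀ v, ∃ a : ℝ, f v = Set.Icc a (a+1) ∨ f v = Set.Ico a (a+1) := by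
    intro v
    rcases hform v with ⟨a, ha⟩ | ⟨a, ha⟩
    exacts [⟨a, Or.inl ha⟩, ⟨a, Or.inr ha⟩]
  choose x hxf using hx
  set P : V → Prop := fun v => f v = Set.Icc (x v) (x v + 1) with hP
  have hf : ∀ v, f v = if P v then Set.Icc (x v) (x v + 1) else Set.Ico (x v) (x v + 1) := by
    intro v; split_ifs with h'
    · exact h'
    · rcases hxf v with h'' | h''
      · exact absurd h'' h'
      · exact h''
  -- the finite set of relevant gaps, and δ below all of them
  set X : Finset ℝ := Finset.univ.image x with hX
  set D : Finset ℝ := ((X ×ˢ X).image (fun p => |p.1 - p.2|)).filter (fun d => d ≠ 1) with hD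
  set T : Finset ℝ := insert 1 (D.image (fun d => |d - 1|)) with hT
  have hTne : T.Nonempty := ⟨1, Finset.mem_insert_self _ _⟩
  set δ := T.min' hTne with hδdef
  have hδT : ∀ t ∈ T, δ ≤ t := fun t ht => Finset.min'_le T t ht
  have hδ1 : δ ≤ 1 := hδT 1 (Finset.mem_insert_self _ _)
  have hδ0 : 0 < δ := by
    have hmem := T.min'_mem hTne
    rw [← hδdef] at hmem
    rcases Finset.mem_insert.mp hmem with h' | h'
    · rw [h']; norm_num
    · obtain ⟨d, hd, hd'⟩ := Finset.mem_image.mp h'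
      obtain ⟨-, hdne⟩ := Finset.mem_filter.mp hd
      rw [← hd']
      exact abs_pos.mpr (sub_ne_zero.mpr hdne)
  have hδkey : ∀ u v : V, |x u - x v| ≠ 1 → δ ≤ |(|x u - x v|) - 1| := by
    intro u v hne
    apply hδT
    apply Finset.mem_insert_of_mem
    apply Finset.mem_image.mpr
    refine ⟨|x u - x v|, Finset.mem_filter.mpr ⟨?_, hne⟩, rfl⟩
    exact Finset.mem_image.mpr ⟨(x u, x v),
      Finset.mem_product.mpr ⟨Finset.mem_image_of_mem x (Finset.mem_univ u),
        Finset.mem_image_of_mem x (Finset.mem_univ v)⟩, rfl⟩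
  -- the perturbation
  set ε : V → ℝ := fun v => if P v then 0 else δ * ((1 - x v / (1 + |x v|)) / 2) with hε
  have htb : ∀ a : ℝ, 0 < (1 - a / (1 + |a|)) / 2 ∧ (1 - a / (1 + |a|)) / 2 < 1 := by
    intro a
    have := abs_lt.mp (sBound a)
    constructor <;> linarith [this.1, this.2]
  have hε0 : ∀ v, 0 ≤ ε v := by
    intro v; rw [hε]; dsimp only; split_ifs with h'
    · exact le_refl 0
    · exact le_of_lt (mul_pos hδ0 (htb (x v)).1)
  have hεδ : ∀ v, ε v < δ := by
    intro v; rw [hε]; dsimp only; split_ifs with h'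
    · exact hδ0
    · calc δ * ((1 - x v / (1 + |x v|)) / 2) < δ * 1 :=
            (mul_lt_mul_iff_right₀ hδ0).mpr (htb (x v)).2
        _ = δ := mul_one δ
  have hεpos : ∀ v, ¬ P v → 0 < ε v := by
    intro v hv; rw [hε]; dsimp only; rw [if_neg hv]
    exact mul_pos hδ0 (htb (x v)).1
  have hεanti : ∀ u v, ¬ P u → ¬ P v → x u < x v → ε v < ε u := by
    intro u v hu hv hlt
    rw [hε]; dsimp only; rw [if_neg hu, if_neg hv]
    have := sMono hlt
    have h2 : (1 - x v / (1 + |x v|)) / 2 < (1 - x u / (1 + |x u|)) / 2 := by linarith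
    exact (mul_lt_mul_iff_right₀ hδ0).mpr h2
  -- key arithmetic equivalence
  have key : ∀ u v : V,
      (x v - ε v ≤ (x u - ε u) + 1) ↔ (if P u then x v ≤ x u + 1 else x v < x u + 1) := by
    intro u v
    have hεu0 := hε0 u; have hεv0 := hε0 v
    have hεuδ := hεδ u; have hεvδ := hεδ v
    by_cases hu : P u
    · have hεu : ε u = 0 := by rw [hε]; dsimp only; rw [if_pos hu]
      rw [if_pos hu]
      constructor
      · intro hle
        by_contra hgt
        push_neg at hgt
        have habs : |x u - x v| = x v - x u := by
          rw [abs_sub_comm]; exact abs_of_pos (by linarith)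
        have hne : |x u - x v| ≠ 1 := by rw [habs]; intro hc; linarith
        have := hδkey u v hne
        rw [habs, abs_of_pos (by linarith : (0:ℝ) < x v - x u - 1)] at this
        linarith
      · intro hle; linarith
    · have hεu : 0 < ε u := hεpos u hu
      rw [if_neg hu]
      constructor
      · intro hle
        by_contra hgt
        push_neg at hgt  -- x u + 1 ≤ x v
        rcases eq_or_lt_of_le hgt with heq | hlt
        · -- x v = x u + 1 exactly
          by_cases hv : P v
          · have hεv : ε v = 0 := by rw [hε]; dsimp only; rw [if_pos hv]
            linarith
          · have : ε v < ε u := hεanti u v hu hv (by linarith)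
            linarith
        · have habs : |x u - x v| = x v - x u := by
            rw [abs_sub_comm]; exact abs_of_pos (by linarith)
          have hne : |x u - x v| ≠ 1 := by rw [habs]; intro hc; linarith
          have := hδkey u v hne
          rw [habs, abs_of_pos (by linarith : (0:ℝ) < x v - x u - 1)] at this
          linarith
      · intro hlt
        by_cases h1 : |x u - x v| = 1
        · -- since x v < x u + 1, must have x v - x u = -1
          rcases abs_cases (x u - x v) with ⟨ha, -⟩ | ⟨ha, -⟩ <;> rw [h1] at ha
          · linarith
          · linarith
        · have := hδkey u v h1
          rcases abs_cases (x u - x v) with ⟨ha, ha'⟩ | ⟨ha, ha'⟩ <;>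
            rcases abs_cases (|x u - x v| - 1) with ⟨hb, hb'⟩ | ⟨hb, hb'⟩ <;>
            rw [ha] at hb hb' this <;> rw [hb] at this <;> linarith
  -- build the closed representation
  refine ⟨fun v => Set.Icc (x v - ε v) ((x v - ε v) + 1), ?_, fun v => ⟨x v - ε v, rfl⟩⟩
  intro u v huv
  rw [hrep u v huv, hf u, hf v, mixed_inter, icc_inter, key u v, key v u]
end

section
/- Let G be the graph on vertices {a,b,c,d,e,f,g,h} with edges ab, ac, bc, cd, ce, cf, de, ah, eg. Then G has an intersection representation by unit intervals (using all four types), but has no intersection representation using only closed, open, and closed-open unit intervals, and no intersection representation using only closed, open, and open-closed unit intervals. -/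
open Set

def G9 : SimpleGraph (Fin 8) :=
  SimpleGraph.fromRel (fun i j => ((i : ℕ), (j : ℕ)) ∈
    ({(0,1),(0,2),(1,2),(2,3),(2,4),(2,5),(3,4),(0,7),(4,6)} : Set (ℕ × ℕ)))

/-! Label the vertices `a, …, h` as `0, …, 7`. Both `a` and `b` meet `c` and miss `d`, `e`, `f`,
and `c` is the only neighbour of `f`. If `I(a)` lies left of `I(d)`, then `I(a)` is determined by
`I(c)` and `I(f)`. If `I(f)` lies right of `I(a)`, then `I(a)` meets `I(c)` only in its right end,
so, open-closed intervals being excluded, it is the closed interval ending where `I(c)` starts. If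
`I(f)` lies left of `I(a)`, it touches `I(c)` in the left end of `I(c)`, which `I(a)` must avoid, so
`I(a)` is the open interval starting there. The same holds for `b`, so `I(a) = I(b)`, although `h`
meets exactly one of them. If `I(d)` lies left of `I(a)`, the same argument gives `I(d) = I(e)`,
although `g` meets exactly one of them. The reflection `t ↦ -t` swaps closed-open and open-closed
intervals. -/

@[ext]
structure UnitIv where
  pos : ℝ
  closedLeft : Bool
  closedRight : Bool

namespace UnitIv

def toSet (I : UnitIv) : Set ℝ :=
  {t | (if I.closedLeft then I.pos ≤ t else I.pos < t) ∧
    (if I.closedRight then t ≤ I.pos + 1 else t < I.pos + 1)}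

def Meets (I J : UnitIv) : Prop :=
  (I.pos < J.pos + 1 ∧ J.pos < I.pos + 1) ∨ (J.pos = I.pos + 1 ∧ I.closedRight ∧ J.closedLeft) ∨
    (I.pos = J.pos + 1 ∧ J.closedRight ∧ I.closedLeft)

def reflect (I : UnitIv) : UnitIv := ⟨-I.pos - 1, I.closedRight, I.closedLeft⟩

variable {I J : UnitIv} {t : ℝ}

theorem pos_le_of_mem (ht : t ∈ I.toSet) : I.pos ≤ t ∧ t ≤ I.pos + 1 := by
  obtain ⟨hl, hr⟩ := ht
  constructor
  · split at hl <;> linarith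
  · split at hr <;> linarith

theorem mem_of_lt (h₁ : I.pos < t) (h₂ : t < I.pos + 1) : t ∈ I.toSet := by
  constructor <;> split <;> linarith

theorem left_mem_iff : I.pos ∈ I.toSet ↔ I.closedLeft := by
  simp [toSet]

theorem right_mem_iff : I.pos + 1 ∈ I.toSet ↔ I.closedRight := by
  simp [toSet]

theorem inter_nonempty_iff : (I.toSet ∩ J.toSet).Nonempty ↔ Meets I J := by
  constructor
  · rintro ⟨t, htI, htJ⟩
    obtain ⟨hI₁, hI₂⟩ := pos_le_of_mem htI
    obtain ⟨hJ₁, hJ₂⟩ := pos_le_of_mem htJ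
    by_cases h₁ : I.pos < J.pos + 1
    · by_cases h₂ : J.pos < I.pos + 1
      · exact Or.inl ⟨h₁, h₂⟩
      · obtain rfl : t = J.pos := by linarith
        have h : J.pos = I.pos + 1 := by linarith
        exact Or.inr (Or.inl ⟨h, right_mem_iff.1 (h ▸ htI), left_mem_iff.1 htJ⟩)
    · obtain rfl : t = I.pos := by linarith
      have h : I.pos = J.pos + 1 := by linarith
      exact Or.inr (Or.inr ⟨h, right_mem_iff.1 (h ▸ htJ), left_mem_iff.1 htI⟩)
  · rintro (⟨h₁, h₂⟩ | ⟨h, hI, hJ⟩ | ⟨h, hJ, hI⟩)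
    · exact ⟨(I.pos + J.pos + 1) / 2, mem_of_lt (by linarith) (by linarith),
        mem_of_lt (by linarith) (by linarith)⟩
    · exact ⟨J.pos, h ▸ right_mem_iff.2 hI, left_mem_iff.2 hJ⟩
    · exact ⟨I.pos, left_mem_iff.2 hI, h ▸ right_mem_iff.2 hJ⟩

theorem toSet_closed (x : ℝ) : (⟨x, true, true⟩ : UnitIv).toSet = Icc x (x + 1) := by
  ext; simp [toSet]

theorem toSet_open (x : ℝ) : (⟨x, false, false⟩ : UnitIv).toSet = Ioo x (x + 1) := by
  ext; simp [toSet]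

theorem toSet_closedOpen (x : ℝ) : (⟨x, true, false⟩ : UnitIv).toSet = Ico x (x + 1) := by
  ext; simp [toSet]

theorem toSet_openClosed (x : ℝ) : (⟨x, false, true⟩ : UnitIv).toSet = Ioc x (x + 1) := by
  ext; simp [toSet]

theorem isUnitInterval_toSet (I : UnitIv) : IsUnitInterval I.toSet := by
  obtain ⟨x, _ | _, _ | _⟩ := I
  · exact Or.inr (Or.inl ⟨x, toSet_open x⟩)
  · exact Or.inr (Or.inr (Or.inr ⟨x, toSet_openClosed x⟩))
  · exact Or.inr (Or.inr (Or.inl ⟨x, toSet_closedOpen x⟩))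
  · exact Or.inl ⟨x, toSet_closed x⟩

theorem exists_eq_toSet_of_not_openClosed {S : Set ℝ}
    (hS : IsUnitCC S ∨ IsUnitOO S ∨ IsUnitCO S) :
    ∃ I : UnitIv, S = I.toSet ∧ (I.closedRight → I.closedLeft) := by
  rcases hS with ⟨x, rfl⟩ | ⟨x, rfl⟩ | ⟨x, rfl⟩
  · exact ⟨⟨x, true, true⟩, (toSet_closed x).symm, fun _ => rfl⟩
  · exact ⟨⟨x, false, false⟩, (toSet_open x).symm, id⟩
  · exact ⟨⟨x, true, false⟩, (toSet_closedOpen x).symm, fun _ => rfl⟩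

theorem exists_eq_toSet_of_not_closedOpen {S : Set ℝ}
    (hS : IsUnitCC S ∨ IsUnitOO S ∨ IsUnitOC S) :
    ∃ I : UnitIv, S = I.toSet ∧ (I.closedLeft → I.closedRight) := by
  rcases hS with ⟨x, rfl⟩ | ⟨x, rfl⟩ | ⟨x, rfl⟩
  · exact ⟨⟨x, true, true⟩, (toSet_closed x).symm, fun _ => rfl⟩
  · exact ⟨⟨x, false, false⟩, (toSet_open x).symm, id⟩
  · exact ⟨⟨x, false, true⟩, (toSet_openClosed x).symm, fun _ => rfl⟩

theorem Meets.symm (h : Meets I J) : Meets J I := by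
  unfold Meets at *; tauto

theorem Meets.pos_le (h : Meets I J) : I.pos ≤ J.pos + 1 := by
  rcases h with ⟨h, -⟩ | ⟨h, -⟩ | ⟨h, -⟩ <;> linarith

theorem Meets.closed_of_pos_eq (h : Meets I J) (hp : J.pos = I.pos + 1) :
    I.closedRight ∧ J.closedLeft := by
  rcases h with ⟨-, h⟩ | ⟨-, h⟩ | ⟨h, -⟩
  · linarith
  · exact h
  · linarith

theorem le_or_le_of_not_meets (h : ¬Meets I J) : I.pos + 1 ≤ J.pos ∨ J.pos + 1 ≤ I.pos := by
  by_contra! h'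
  exact h (Or.inl h'.symm)

theorem meets_reflect_iff : Meets I.reflect J.reflect ↔ Meets I J := by
  simp only [Meets, reflect]
  constructor <;> rintro (⟨h₁, h₂⟩ | ⟨h, h'⟩ | ⟨h, h'⟩)
  all_goals first
    | exact Or.inl ⟨by linarith, by linarith⟩
    | exact Or.inr (Or.inl ⟨by linarith, h'.symm⟩)
    | exact Or.inr (Or.inr ⟨by linarith, h'.symm⟩)

theorem pos_add_one_le_of_meets_of_not_meets {K : UnitIv} (hIJ : Meets I J) (hJK : ¬Meets J K)
    (hIK : I.pos + 1 ≤ K.pos) : J.pos + 1 ≤ K.pos := by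
  have := hIJ.symm.pos_le
  rcases le_or_le_of_not_meets hJK with h | h
  · exact h
  · linarith

theorem eq_ite_of_meets_pendant {A C D F : UnitIv} (hA : A.closedRight → A.closedLeft)
    (hAC : Meets A C) (hCD : Meets C D) (hCF : Meets C F) (hAF : ¬Meets A F) (hDF : ¬Meets D F)
    (hAD : A.pos + 1 ≤ D.pos) :
    A = if C.pos ≤ F.pos then ⟨C.pos - 1, true, true⟩ else ⟨C.pos, false, false⟩ := by
  have := hAC.pos_le; have := hAC.symm.pos_le; have := hCD.symm.pos_le
  have := hCF.pos_le; have := hCF.symm.pos_le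
  rcases le_or_le_of_not_meets hAF with hA_F | hF_A
  · have hCA : C.pos = A.pos + 1 := by rcases le_or_le_of_not_meets hDF <;> linarith
    have hr := (hAC.closed_of_pos_eq hCA).1
    rw [if_pos (by linarith)]
    ext
    · exact (by linarith : A.pos = C.pos - 1)
    · exact hA hr
    · exact hr
  · have hFC : C.pos = F.pos + 1 := by linarith
    have hl : A.closedLeft = false := Bool.eq_false_iff.2 fun hl =>
      hAF (Or.inr (Or.inr ⟨by linarith, (hCF.symm.closed_of_pos_eq hFC).1, hl⟩))
    have hr : A.closedRight = false := Bool.eq_false_iff.2 fun hr => by simp [hA hr] at hl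
    rw [if_neg (by linarith)]
    ext
    · exact (by linarith : A.pos = C.pos)
    · exact hl
    · exact hr

end UnitIv

def IsMeetsRep {V : Type*} (G : SimpleGraph V) (U : V → UnitIv) : Prop :=
  ∀ u v, u ≠ v → (G.Adj u v ↔ (U u).Meets (U v))

theorem isRep_toSet_iff {V : Type*} {G : SimpleGraph V} {U : V → UnitIv} :
    IsRep G (fun v => (U v).toSet) ↔ IsMeetsRep G U := by
  simp only [IsRep, IsMeetsRep, UnitIv.inter_nonempty_iff]

theorem IsMeetsRep.reflect {V : Type*} {G : SimpleGraph V} {U : V → UnitIv}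
    (hU : IsMeetsRep G U) : IsMeetsRep G (fun v => (U v).reflect) :=
  fun u v huv => (hU u v huv).trans UnitIv.meets_reflect_iff.symm

open UnitIv in
theorem not_isMeetsRep_G9 {U : Fin 8 → UnitIv} (hU : IsMeetsRep G9 U)
    (hty : ∀ v, (U v).closedRight → (U v).closedLeft) : False := by
  have adj : ∀ u v, G9.Adj u v → (U u).Meets (U v) := fun u v h => (hU u v h.ne).1 h
  have nonadj : ∀ u v, u ≠ v → ¬G9.Adj u v → ¬(U u).Meets (U v) :=
    fun u v huv h m => h ((hU u v huv).2 m)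
  rcases le_or_le_of_not_meets (nonadj 0 3 (by decide) (by simp [G9])) with had | hda
  · have hbd := pos_add_one_le_of_meets_of_not_meets (adj 0 1 (by simp [G9]))
      (nonadj 1 3 (by decide) (by simp [G9])) had
    have hab : U 0 = U 1 :=
      (eq_ite_of_meets_pendant (hty 0) (adj 0 2 (by simp [G9])) (adj 2 3 (by simp [G9]))
        (adj 2 5 (by simp [G9])) (nonadj 0 5 (by decide) (by simp [G9]))
        (nonadj 3 5 (by decide) (by simp [G9])) had).trans
      (eq_ite_of_meets_pendant (hty 1) (adj 1 2 (by simp [G9])) (adj 2 3 (by simp [G9]))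
        (adj 2 5 (by simp [G9])) (nonadj 1 5 (by decide) (by simp [G9]))
        (nonadj 3 5 (by decide) (by simp [G9])) hbd).symm
    exact nonadj 1 7 (by decide) (by simp [G9]) (hab ▸ adj 0 7 (by simp [G9]))
  · have hea := pos_add_one_le_of_meets_of_not_meets (adj 3 4 (by simp [G9]))
      (nonadj 4 0 (by decide) (by simp [G9])) hda
    have hed : U 4 = U 3 :=
      (eq_ite_of_meets_pendant (hty 4) (adj 4 2 (by simp [G9])) (adj 2 0 (by simp [G9]))
        (adj 2 5 (by simp [G9])) (nonadj 4 5 (by decide) (by simp [G9]))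
        (nonadj 0 5 (by decide) (by simp [G9])) hea).trans
      (eq_ite_of_meets_pendant (hty 3) (adj 3 2 (by simp [G9])) (adj 2 0 (by simp [G9]))
        (adj 2 5 (by simp [G9])) (nonadj 3 5 (by decide) (by simp [G9]))
        (nonadj 0 5 (by decide) (by simp [G9])) hda).symm
    exact nonadj 3 6 (by decide) (by simp [G9]) (hed ▸ adj 4 6 (by simp [G9]))

def G9Rep : Fin 8 → UnitIv :=
  ![⟨0, true, true⟩, ⟨0, false, true⟩, ⟨1, true, true⟩, ⟨2, true, false⟩, ⟨2, true, true⟩,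
    ⟨1, false, false⟩, ⟨3, true, true⟩, ⟨-1, true, true⟩]

theorem isMeetsRep_G9Rep : IsMeetsRep G9 G9Rep := by
  intro u v huv
  fin_cases u <;> fin_cases v <;> first
    | exact absurd rfl huv
    | norm_num [G9, G9Rep, UnitIv.Meets]

theorem stmt9 :
    MixedUIG G9 ∧
    ¬ (∃ f : Fin 8 → Set ℝ, IsRep G9 f ∧
      ∀ v, IsUnitCC (f v) ∨ IsUnitOO (f v) ∨ IsUnitCO (f v)) ∧
    ¬ (∃ f : Fin 8 → Set ℝ, IsRep G9 f ∧
      ∀ v, IsUnitCC (f v) ∨ IsUnitOO (f v) ∨ IsUnitOC (f v)) := by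
  refine ⟨⟨_, isRep_toSet_iff.2 isMeetsRep_G9Rep, fun v => (G9Rep v).isUnitInterval_toSet⟩,
    ?_, ?_⟩
  · rintro ⟨f, hf, htype⟩
    choose U hU hty using fun v => UnitIv.exists_eq_toSet_of_not_openClosed (htype v)
    obtain rfl : f = fun v => (U v).toSet := funext hU
    exact not_isMeetsRep_G9 (isRep_toSet_iff.1 hf) hty
  · rintro ⟨f, hf, htype⟩
    choose U hU hty using fun v => UnitIv.exists_eq_toSet_of_not_closedOpen (htype v)
    obtain rfl : f = fun v => (U v).toSet := funext hU
    exact not_isMeetsRep_G9 (isRep_toSet_iff.1 hf).reflect hty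
end

section
/- Let G be a graph with a mixed unit interval representation I, and let ε be the minimum positive distance between distinct endpoints of intervals in the representation (or 1 if all endpoints coincide). If 0 < ε' < ε and a vertex x has an interval with open left end, then shifting I(x) to the right by ε' yields a representation in which I(x) keeps all its original intersections (though new intersections may arise). -/
open Set

theorem stmt12 {V : Type*} (G : SimpleGraph V) (f : V → Set ℝ)
    (hrep : IsRep G f) (hunit : ∀ v, IsUnitInterval (f v))
    (ε : ℝ) (hε0 : 0 < ε) (hε1 : ε ≤ 1)
    (hεmin : ∀ s t : V, ∀ p ∈ ({sInf (f s), sSup (f s)} : Set ℝ),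
      ∀ q ∈ ({sInf (f t), sSup (f t)} : Set ℝ), p ≠ q → ε ≤ |p - q|)
    (ε' : ℝ) (h1 : 0 < ε') (h2 : ε' < ε)
    (x : V) (hopen : sInf (f x) ∉ f x) :
    ∀ t : V, G.Adj t x → ((f t) ∩ ((· + ε') '' (f x))).Nonempty := by
  intro t hadj
  obtain ⟨y, hyt, hyx⟩ := (hrep t x hadj.ne).mp hadj
  obtain ⟨a, hxsub, hxsh, hxinf⟩ :
      ∃ a, f x ⊆ Ioc a (a + 1) ∧ Ioo (a + ε') (a + 1 + ε') ⊆ (· + ε') '' (f x) ∧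
        sInf (f x) = a := by
    rcases hunit x with ⟨a, h⟩ | ⟨a, h⟩ | ⟨a, h⟩ | ⟨a, h⟩
    · exfalso; apply hopen; rw [h, csInf_Icc (by linarith)]
      exact ⟨le_refl a, by linarith⟩
    · refine ⟨a, ?_, ?_, by rw [h, csInf_Ioo (by linarith)]⟩
      · rw [h]; exact Ioo_subset_Ioc_self
      · rintro z ⟨hz1, hz2⟩
        exact ⟨z - ε', h ▸ ⟨by linarith, by linarith⟩, by ring⟩
    · exfalso; apply hopen; rw [h, csInf_Ico (by linarith)]
      exact ⟨le_refl a, by linarith⟩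
    · refine ⟨a, by rw [h], ?_, by rw [h, csInf_Ioc (by linarith)]⟩
      rintro z ⟨hz1, hz2⟩
      exact ⟨z - ε', h ▸ ⟨by linarith, by linarith⟩, by ring⟩
  obtain ⟨b, hbsub, hbsup, hbIoo⟩ :
      ∃ b, f t ⊆ Icc b (b + 1) ∧ sSup (f t) = b + 1 ∧ Ioo b (b + 1) ⊆ f t := by
    rcases hunit t with ⟨b, h⟩ | ⟨b, h⟩ | ⟨b, h⟩ | ⟨b, h⟩
    · exact ⟨b, by rw [h], by rw [h, csSup_Icc (by linarith)], by rw [h]; exact Ioo_subset_Icc_self⟩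
    · exact ⟨b, by rw [h]; exact Ioo_subset_Icc_self, by rw [h, csSup_Ioo (by linarith)],
        by rw [h]⟩
    · exact ⟨b, by rw [h]; exact Ico_subset_Icc_self, by rw [h, csSup_Ico (by linarith)],
        by rw [h]; exact Ioo_subset_Ico_self⟩
    · exact ⟨b, by rw [h]; exact Ioc_subset_Icc_self, by rw [h, csSup_Ioc (by linarith)],
        by rw [h]; exact Ioo_subset_Ioc_self⟩
  obtain ⟨hya, hya1⟩ := hxsub hyx
  obtain ⟨hby, hyb1⟩ := hbsub hyt
  by_cases hy : a + ε' < y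
  · exact ⟨y, hyt, hxsh ⟨hy, by linarith⟩⟩
  · push_neg at hy
    -- y ≤ a + ε', so b + 1 must be ≥ a + ε
    have hne : b + 1 ≠ a := by linarith
    have hεle : ε ≤ |b + 1 - a| := by
      have := hεmin t x (sSup (f t)) (by right; rfl) (sInf (f x)) (by left; rfl)
      rw [hbsup, hxinf] at this
      exact this hne
    have hb1 : a + ε ≤ b + 1 := by
      rcases abs_cases (b + 1 - a) with ⟨he, _⟩ | ⟨he, _⟩ <;> [linarith; linarith]
    set z := (a + ε' + min (b + 1) (a + 1 + ε')) / 2 with hz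
    have hmin1 : min (b + 1) (a + 1 + ε') ≤ b + 1 := min_le_left _ _
    have hmin2 : min (b + 1) (a + 1 + ε') ≤ a + 1 + ε' := min_le_right _ _
    have hmin3 : a + ε' < min (b + 1) (a + 1 + ε') := lt_min (by linarith) (by linarith)
    have hzft : z ∈ f t := hbIoo ⟨by linarith, by linarith⟩
    exact ⟨z, hzft, hxsh ⟨by linarith, by linarith⟩⟩
end

section
/- Let I be a mixed unit interval representation of a graph G, and suppose the interval I(x) of some vertex x is 'left-free', meaning no other vertex t satisfies r(t) = l(x). Then replacing I(x) by I(x) ∪ {l(x)} (closing its left end) yields a representation of the same graph G (no new adjacencies are created). -/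
open Set

lemma unit_struct {I : Set ℝ} (h : IsUnitInterval I) :
    Ioo (sInf I) (sInf I + 1) ⊆ I ∧ I ⊆ Icc (sInf I) (sInf I + 1) ∧ sSup I = sInf I + 1 := by
  have hl : ∀ a : ℝ, a < a + 1 := fun a => by linarith
  rcases h with ⟨a, rfl⟩ | ⟨a, rfl⟩ | ⟨a, rfl⟩ | ⟨a, rfl⟩
  · rw [csInf_Icc (le_of_lt (hl a)), csSup_Icc (le_of_lt (hl a))]
    exact ⟨Ioo_subset_Icc_self, subset_rfl, rfl⟩
  · rw [csInf_Ioo (hl a), csSup_Ioo (hl a)]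
    exact ⟨subset_rfl, Ioo_subset_Icc_self, rfl⟩
  · rw [csInf_Ico (hl a), csSup_Ico (hl a)]
    exact ⟨Ioo_subset_Ico_self, Ico_subset_Icc_self, rfl⟩
  · rw [csInf_Ioc (hl a), csSup_Ioc (hl a)]
    exact ⟨Ioo_subset_Ioc_self, Ioc_subset_Icc_self, rfl⟩

lemma key_lem {V : Type*} (f : V → Set ℝ) (hunit : ∀ v, IsUnitInterval (f v)) (x t : V)
    (hfree : sSup (f t) ≠ sInf (f x)) :
    (f t ∩ insert (sInf (f x)) (f x)).Nonempty ↔ (f t ∩ f x).Nonempty := by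
  constructor
  · rintro ⟨y, hyt, hyx⟩
    rcases hyx with rfl | hyx
    · obtain ⟨hsubx, _, _⟩ := unit_struct (hunit x)
      obtain ⟨hsubt, hsupt, hsupeq⟩ := unit_struct (hunit t)
      set p := sInf (f x) with hp
      set a := sInf (f t) with ha
      have hpa : p ∈ Icc a (a + 1) := hsupt hyt
      have hplt : p < a + 1 :=
        lt_of_le_of_ne hpa.2 (fun h => hfree (hsupeq.trans h.symm))
      set y0 := (p + min (a + 1) (p + 1)) / 2 with hy0
      have hmin : p < min (a + 1) (p + 1) := lt_min hplt (by linarith)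
      have h1 : p < y0 := by rw [hy0]; linarith
      have h2 : y0 < min (a + 1) (p + 1) := by rw [hy0]; linarith
      exact ⟨y0, hsubt ⟨lt_of_le_of_lt hpa.1 h1, lt_of_lt_of_le h2 (min_le_left _ _)⟩,
        hsubx ⟨h1, lt_of_lt_of_le h2 (min_le_right _ _)⟩⟩
    · exact ⟨y, hyt, hyx⟩
  · rintro ⟨y, hyt, hyx⟩; exact ⟨y, hyt, Or.inr hyx⟩

theorem stmt13 {V : Type*} [DecidableEq V] (G : SimpleGraph V) (f : V → Set ℝ)
    (hrep : IsRep G f) (hunit : ∀ v, IsUnitInterval (f v))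
    (x : V) (hfree : ∀ t : V, t ≠ x → sSup (f t) ≠ sInf (f x)) :
    IsRep G (Function.update f x (insert (sInf (f x)) (f x))) := by
  intro u v huv
  rw [hrep u v huv]
  by_cases hu : u = x
  · subst hu
    have hv : v ≠ u := fun h => huv h.symm
    rw [Function.update_self, Function.update_of_ne hv,
      Set.inter_comm (insert _ _), key_lem f hunit u v (hfree v hv),
      Set.inter_comm]
  · by_cases hv : v = x
    · subst hv
      rw [Function.update_self, Function.update_of_ne hu,
        key_lem f hunit v u (hfree u hu)]
    · rw [Function.update_of_ne hu, Function.update_of_ne hv]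
end

section
/- Suppose in a mixed unit interval representation I of a graph G there is a vertex u with I(u) = (0,1] (open-closed), and no vertex v with I(v) = [0,1]. Then G has another mixed unit interval representation with strictly fewer open-closed intervals and the same number of closed-open intervals. (Explicitly: shift by -ε/2 every interval whose left endpoint is an integer ≤ 0 other than I(u), and replace I(u) by [0,1], where ε is the minimum positive distance between distinct interval endpoints.) -/
open Set

/-!
Let `ε` be the least positive value of `||a - b| - 1|` over pairs of left endpoints. Moving left by
`ε / 2` every interval other than `(0,1]` whose left endpoint is a nonpositive integer reverses no
strict comparison between a left and a right endpoint, so only touching pairs, where one interval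
ends exactly where the other begins, can change adjacency. The shift separates only touching pairs
at `0` or at `1` with exactly one moved member, and these were already disjoint: `(0,1]` is open at
`0`, and an interval starting at `0` other than `[0,1]` and `(0,1]` misses `1`. Closing `(0,1]` to
`[0,1]` adds only the point `0`, where after the shift no interval ends.
-/

/-- The four kinds of unit interval with left end `a` are exactly the sets between `(a, a + 1)`
and `[a, a + 1]`. -/
def IsUnitIntervalAt (I : Set ℝ) (a : ℝ) : Prop := Ioo a (a + 1) ⊆ I ∧ I ⊆ Icc a (a + 1)

lemma isUnitIntervalAt_Icc (a : ℝ) : IsUnitIntervalAt (Icc a (a + 1)) a :=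
  ⟨Ioo_subset_Icc_self, subset_rfl⟩

lemma isUnitIntervalAt_Ioc (a : ℝ) : IsUnitIntervalAt (Ioc a (a + 1)) a :=
  ⟨Ioo_subset_Ioc_self, Ioc_subset_Icc_self⟩

lemma IsUnitInterval.exists_isUnitIntervalAt {I : Set ℝ} (h : IsUnitInterval I) :
    ∃ a, IsUnitIntervalAt I a := by
  rcases h with ⟨a, rfl⟩ | ⟨a, rfl⟩ | ⟨a, rfl⟩ | ⟨a, rfl⟩
  · exact ⟨a, isUnitIntervalAt_Icc a⟩
  · exact ⟨a, subset_rfl, Ioo_subset_Icc_self⟩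
  · exact ⟨a, Ioo_subset_Ico_self, Ico_subset_Icc_self⟩
  · exact ⟨a, isUnitIntervalAt_Ioc a⟩

namespace IsUnitIntervalAt

variable {I J I' J' : Set ℝ} {a b a' b' : ℝ}

lemma closure_eq (h : IsUnitIntervalAt I a) : closure I = Icc a (a + 1) := by
  refine subset_antisymm (closure_minimal h.2 isClosed_Icc) ?_
  rw [← closure_Ioo (by linarith : a ≠ a + 1)]
  exact closure_mono h.1

lemma left_unique (hI : IsUnitIntervalAt I a) (hI' : IsUnitIntervalAt I b) : a = b :=
  ((Icc_eq_Icc_iff (by linarith)).1 (hI.closure_eq.symm.trans hI'.closure_eq)).1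

lemma image_sub (h : IsUnitIntervalAt I a) (c : ℝ) :
    IsUnitIntervalAt ((· - c) '' I) (a - c) := by
  have e : a + 1 - c = a - c + 1 := by ring
  constructor
  · rw [← e, ← image_sub_const_Ioo]; exact image_mono h.1
  · rw [← e, ← image_sub_const_Icc]; exact image_mono h.2

lemma eq_Ioc_or_eq_Icc_of_right_mem (h : IsUnitIntervalAt I a) (ha : a + 1 ∈ I) :
    I = Ioc a (a + 1) ∨ I = Icc a (a + 1) := by
  have hIoc : Ioc a (a + 1) ⊆ I := fun x hx =>
    (eq_or_lt_of_le hx.2).elim (fun e => e ▸ ha) fun hx₂ => h.1 ⟨hx.1, hx₂⟩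
  by_cases h₀ : a ∈ I
  · refine Or.inr (subset_antisymm h.2 fun x hx => ?_)
    rcases eq_or_lt_of_le hx.1 with rfl | hx₁
    exacts [h₀, hIoc ⟨hx₁, hx.2⟩]
  · refine Or.inl (subset_antisymm (fun x hx => ⟨?_, (h.2 hx).2⟩) hIoc)
    exact lt_of_le_of_ne (h.2 hx).1 fun e => h₀ (e ▸ hx)

lemma inter_nonempty_iff_of_abs_sub_ne_one (hI : IsUnitIntervalAt I a)
    (hJ : IsUnitIntervalAt J b) (hab : |a - b| ≠ 1) : (I ∩ J).Nonempty ↔ |a - b| < 1 := by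
  refine ⟨fun ⟨x, hxI, hxJ⟩ => (abs_le.2 ⟨?_, ?_⟩).lt_of_ne hab, fun h => ?_⟩
  · linarith [(hI.2 hxI).2, (hJ.2 hxJ).1]
  · linarith [(hI.2 hxI).1, (hJ.2 hxJ).2]
  · obtain ⟨h₁, h₂⟩ := abs_lt.1 h
    exact ⟨(a + b + 1) / 2, hI.1 ⟨by linarith, by linarith⟩, hJ.1 ⟨by linarith, by linarith⟩⟩

lemma not_inter_nonempty_of_one_lt_abs_sub (hI : IsUnitIntervalAt I a)
    (hJ : IsUnitIntervalAt J b) (hab : 1 < |a - b|) : ¬(I ∩ J).Nonempty := by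
  rw [hI.inter_nonempty_iff_of_abs_sub_ne_one hJ hab.ne']
  exact hab.not_gt

lemma inter_nonempty_iff_of_eq_add_one (hI : IsUnitIntervalAt I a) (hJ : IsUnitIntervalAt J b)
    (hab : b = a + 1) : (I ∩ J).Nonempty ↔ b ∈ I ∧ b ∈ J := by
  refine ⟨fun ⟨x, hxI, hxJ⟩ => ?_, fun h => ⟨b, h⟩⟩
  obtain rfl : x = b := le_antisymm (hab ▸ (hI.2 hxI).2) (hJ.2 hxJ).1
  exact ⟨hxI, hxJ⟩

lemma inter_nonempty_iff_of_abs_sub_lt (hI : IsUnitIntervalAt I a) (hJ : IsUnitIntervalAt J b)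
    (hI' : IsUnitIntervalAt I' a') (hJ' : IsUnitIntervalAt J' b')
    (h : |(a' - b') - (a - b)| < |(|a - b| - 1)|) :
    (I ∩ J).Nonempty ↔ (I' ∩ J').Nonempty := by
  have h' := (abs_abs_sub_abs_le_abs_sub (a' - b') (a - b)).trans_lt h
  rw [abs_lt] at h'
  have hp : |a - b| ≠ 1 := by intro e; rw [e, sub_self, abs_zero] at h'; linarith
  have hq : |a' - b'| ≠ 1 := by intro e; rw [e] at h'; cases abs_cases (|a - b| - 1) <;> linarith
  rw [hI.inter_nonempty_iff_of_abs_sub_ne_one hJ hp,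
    hI'.inter_nonempty_iff_of_abs_sub_ne_one hJ' hq]
  cases abs_cases (|a - b| - 1) <;> constructor <;> intro <;> linarith

end IsUnitIntervalAt

lemma IsUnitCC.image_sub {I : Set ℝ} (h : IsUnitCC I) (c : ℝ) : IsUnitCC ((· - c) '' I) := by
  obtain ⟨x, rfl⟩ := h
  exact ⟨x - c, by rw [image_sub_const_Icc]; ring_nf⟩

lemma IsUnitOO.image_sub {I : Set ℝ} (h : IsUnitOO I) (c : ℝ) : IsUnitOO ((· - c) '' I) := by
  obtain ⟨x, rfl⟩ := h
  exact ⟨x - c, by rw [image_sub_const_Ioo]; ring_nf⟩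

lemma IsUnitCO.image_sub {I : Set ℝ} (h : IsUnitCO I) (c : ℝ) : IsUnitCO ((· - c) '' I) := by
  obtain ⟨x, rfl⟩ := h
  exact ⟨x - c, by rw [image_sub_const_Ico]; ring_nf⟩

lemma IsUnitOC.image_sub {I : Set ℝ} (h : IsUnitOC I) (c : ℝ) : IsUnitOC ((· - c) '' I) := by
  obtain ⟨x, rfl⟩ := h
  exact ⟨x - c, by rw [image_sub_const_Ioc]; ring_nf⟩

lemma IsUnitInterval.image_sub {I : Set ℝ} (h : IsUnitInterval I) (c : ℝ) :
    IsUnitInterval ((· - c) '' I) :=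
  h.imp (·.image_sub c) <| Or.imp (·.image_sub c) <| Or.imp (·.image_sub c) (·.image_sub c)

lemma isUnitCO_image_sub_iff (I : Set ℝ) (c : ℝ) : IsUnitCO ((· - c) '' I) ↔ IsUnitCO I :=
  ⟨fun h => by simpa [image_image] using h.image_sub (-c), (·.image_sub c)⟩

lemma isUnitOC_image_sub_iff (I : Set ℝ) (c : ℝ) : IsUnitOC ((· - c) '' I) ↔ IsUnitOC I :=
  ⟨fun h => by simpa [image_image] using h.image_sub (-c), (·.image_sub c)⟩

lemma not_isUnitCO_Icc (a : ℝ) : ¬IsUnitCO (Icc a (a + 1)) := by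
  rintro ⟨x, h⟩
  have h₁ : a ∈ Ico x (x + 1) := h ▸ left_mem_Icc.2 (by linarith)
  have h₂ : a + 1 ∈ Ico x (x + 1) := h ▸ right_mem_Icc.2 (by linarith)
  linarith [h₁.1, h₂.2]

lemma not_isUnitOC_Icc (a : ℝ) : ¬IsUnitOC (Icc a (a + 1)) := by
  rintro ⟨x, h⟩
  have h₁ : a ∈ Ioc x (x + 1) := h ▸ left_mem_Icc.2 (by linarith)
  have h₂ : a + 1 ∈ Ioc x (x + 1) := h ▸ right_mem_Icc.2 (by linarith)
  linarith [h₁.1, h₂.2]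

lemma not_isUnitCO_Ioc (a : ℝ) : ¬IsUnitCO (Ioc a (a + 1)) := by
  rintro ⟨x, h⟩
  have h₁ : a + 1 ∈ Ico x (x + 1) := h ▸ right_mem_Ioc.2 (by linarith)
  have h₂ : (a + x) / 2 ∈ Ico x (x + 1) := h ▸ ⟨by linarith [h₁.2], by linarith [h₁.1]⟩
  linarith [h₁.2, h₂.1]

lemma exists_pos_le_abs_of_ne_zero {α : Type*} [Finite α] (d : α → ℝ) :
    ∃ ε > 0, ∀ x, d x ≠ 0 → ε ≤ |d x| := by
  rcases isEmpty_or_nonempty {x // d x ≠ 0} with h | h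
  · exact ⟨1, one_pos, fun x hx => (h.false ⟨x, hx⟩).elim⟩
  · obtain ⟨x₀, hx₀⟩ := Finite.exists_min fun x : {x // d x ≠ 0} => |d x|
    exact ⟨|d x₀|, abs_pos.2 x₀.2, fun x hx => hx₀ ⟨x, hx⟩⟩

section ShiftAndClose

variable {V : Type*}

open scoped Classical

noncomputable def shiftAndClose (f : V → Set ℝ) (l : V → ℝ) (c : ℝ) (u : V) : V → Set ℝ :=
  Function.update (fun v => if ∃ n : ℕ, l v = -n then (· - c) '' f v else f v) u (Icc 0 1)

variable {f : V → Set ℝ} {l : V → ℝ} {c : ℝ} {u v w : V}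

lemma shiftAndClose_self : shiftAndClose f l c u u = Icc 0 1 :=
  Function.update_self ..

lemma shiftAndClose_of_ne_of_exists (hv : v ≠ u) (h : ∃ n : ℕ, l v = -n) :
    shiftAndClose f l c u v = (· - c) '' f v := by
  simp only [shiftAndClose, Function.update_of_ne hv, if_pos h]

lemma shiftAndClose_of_ne_of_not_exists (hv : v ≠ u) (h : ¬∃ n : ℕ, l v = -n) :
    shiftAndClose f l c u v = f v := by
  simp only [shiftAndClose, Function.update_of_ne hv, if_neg h]

lemma exists_shiftAndClose_eq_image_sub (hv : v ≠ u) :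
    ∃ s, shiftAndClose f l c u v = (· - s) '' f v := by
  by_cases h : ∃ n : ℕ, l v = -n
  · exact ⟨c, shiftAndClose_of_ne_of_exists hv h⟩
  · exact ⟨0, by simp [shiftAndClose_of_ne_of_not_exists hv h]⟩

lemma isUnitInterval_shiftAndClose (hf : ∀ v, IsUnitInterval (f v)) (v : V) :
    IsUnitInterval (shiftAndClose f l c u v) := by
  rcases eq_or_ne v u with rfl | hv
  · exact Or.inl ⟨0, by rw [shiftAndClose_self, zero_add]⟩
  · obtain ⟨s, hs⟩ := exists_shiftAndClose_eq_image_sub (f := f) (l := l) (c := c) hv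
    exact hs ▸ (hf v).image_sub s

lemma setOf_isUnitOC_shiftAndClose :
    {v | IsUnitOC (shiftAndClose f l c u v)} = {v | IsUnitOC (f v)} \ {u} := by
  ext v
  rcases eq_or_ne v u with rfl | hv
  · simpa [shiftAndClose_self] using not_isUnitOC_Icc 0
  · obtain ⟨s, hs⟩ := exists_shiftAndClose_eq_image_sub (f := f) (l := l) (c := c) hv
    simp [hs, isUnitOC_image_sub_iff, hv]

lemma setOf_isUnitCO_shiftAndClose (hu : f u = Ioc 0 1) :
    {v | IsUnitCO (shiftAndClose f l c u v)} = {v | IsUnitCO (f v)} := by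
  ext v
  rcases eq_or_ne v u with rfl | hv
  · simp only [mem_ofPred_eq, shiftAndClose_self, hu]
    exact iff_of_false (by simpa using not_isUnitCO_Icc 0) (by simpa using not_isUnitCO_Ioc 0)
  · obtain ⟨s, hs⟩ := exists_shiftAndClose_eq_image_sub (f := f) (l := l) (c := c) hv
    simp [hs, isUnitCO_image_sub_iff]

lemma exists_isUnitIntervalAt_shiftAndClose (hl : ∀ v, IsUnitIntervalAt (f v) (l v))
    (hlu : l u = 0) (hc : 0 ≤ c) (v : V) :
    ∃ s ∈ Icc 0 c, IsUnitIntervalAt (shiftAndClose f l c u v) (l v - s) := by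
  rcases eq_or_ne v u with rfl | hv
  · refine ⟨0, ⟨le_rfl, hc⟩, ?_⟩
    simpa [shiftAndClose_self, hlu] using isUnitIntervalAt_Icc 0
  by_cases h : ∃ n : ℕ, l v = -n
  · exact ⟨c, ⟨hc, le_rfl⟩, shiftAndClose_of_ne_of_exists hv h ▸ (hl v).image_sub c⟩
  · exact ⟨0, ⟨le_rfl, hc⟩, by simpa [shiftAndClose_of_ne_of_not_exists hv h] using hl v⟩

lemma not_inter_nonempty_shiftAndClose_of_eq_add_one (hl : ∀ v, IsUnitIntervalAt (f v) (l v))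
    (hc : 0 < c) (hlw : l w = l v + 1) (hv : v ≠ u) (hvn : ∃ n : ℕ, l v = -n)
    (hw : IsUnitIntervalAt (shiftAndClose f l c u w) (l w)) :
    ¬(shiftAndClose f l c u v ∩ shiftAndClose f l c u w).Nonempty := by
  have hgv : IsUnitIntervalAt (shiftAndClose f l c u v) (l v - c) :=
    shiftAndClose_of_ne_of_exists hv hvn ▸ (hl v).image_sub c
  refine hgv.not_inter_nonempty_of_one_lt_abs_sub hw ?_
  rw [hlw, abs_of_neg (by linarith)]
  linarith

lemma shiftAndClose_inter_nonempty_iff_of_eq_add_one_of_ne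
    (hl : ∀ v, IsUnitIntervalAt (f v) (l v)) (hu : f u = Ioc 0 1) (hno : ∀ v, f v ≠ Icc 0 1)
    (hinj : Function.Injective f) (hc : 0 < c) (hv : v ≠ u) (hw : w ≠ u) (hlw : l w = l v + 1) :
    (f v ∩ f w).Nonempty ↔ (shiftAndClose f l c u v ∩ shiftAndClose f l c u w).Nonempty := by
  by_cases hvn : ∃ n : ℕ, l v = -n <;> by_cases hwn : ∃ n : ℕ, l w = -n
  · rw [shiftAndClose_of_ne_of_exists hv hvn, shiftAndClose_of_ne_of_exists hw hwn,
      ← image_inter (sub_left_injective), image_nonempty]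
  · obtain ⟨n, hn⟩ := hvn
    -- `w` would be moved too unless `l w = 1`
    obtain rfl : n = 0 := by
      by_contra hn₀
      exact hwn ⟨n - 1, by rw [hlw, hn, Nat.cast_sub (Nat.one_le_iff_ne_zero.2 hn₀)]; ring⟩
    refine iff_of_false ?_ (not_inter_nonempty_shiftAndClose_of_eq_add_one hl hc hlw hv ⟨0, hn⟩
      (shiftAndClose_of_ne_of_not_exists hw hwn ▸ hl w))
    rw [(hl v).inter_nonempty_iff_of_eq_add_one (hl w) hlw]
    rintro ⟨h₁, -⟩
    rw [Nat.cast_zero, neg_zero] at hn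
    rcases (hl v).eq_Ioc_or_eq_Icc_of_right_mem (hlw ▸ h₁) with h | h
    · exact hv (hinj (by rw [h, hu, hn, zero_add]))
    · exact hno v (by rw [h, hn, zero_add])
  · obtain ⟨n, hn⟩ := hwn
    exact absurd ⟨n + 1, by push_cast; linarith⟩ hvn
  · rw [shiftAndClose_of_ne_of_not_exists hv hvn, shiftAndClose_of_ne_of_not_exists hw hwn]

lemma shiftAndClose_inter_nonempty_iff_of_eq_add_one (hl : ∀ v, IsUnitIntervalAt (f v) (l v))
    (hu : f u = Ioc 0 1) (hlu : l u = 0) (hno : ∀ v, f v ≠ Icc 0 1)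
    (hinj : Function.Injective f) (hc : 0 < c) (hvw : v ≠ w) (hlw : l w = l v + 1) :
    (f v ∩ f w).Nonempty ↔ (shiftAndClose f l c u v ∩ shiftAndClose f l c u w).Nonempty := by
  have hgu : IsUnitIntervalAt (shiftAndClose f l c u u) (l u) := by
    simpa [shiftAndClose_self, hlu] using isUnitIntervalAt_Icc 0
  rcases eq_or_ne v u with rfl | hv
  · have hwn : ¬∃ n : ℕ, l w = -n := fun ⟨n, hn⟩ => by linarith [n.cast_nonneg (α := ℝ)]
    have hgw := shiftAndClose_of_ne_of_not_exists (f := f) (c := c) hvw.symm hwn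
    rw [(hl v).inter_nonempty_iff_of_eq_add_one (hl w) hlw,
      hgu.inter_nonempty_iff_of_eq_add_one (hgw ▸ hl w) hlw, shiftAndClose_self, hu, hgw, hlw, hlu]
    simp
  rcases eq_or_ne w u with rfl | hw
  · refine iff_of_false ?_ (not_inter_nonempty_shiftAndClose_of_eq_add_one hl hc hlw hv
      ⟨1, by push_cast; linarith⟩ hgu)
    rw [(hl v).inter_nonempty_iff_of_eq_add_one (hl w) hlw, hu, hlu]
    exact fun h => h.2.1.false
  exact shiftAndClose_inter_nonempty_iff_of_eq_add_one_of_ne hl hu hno hinj hc hv hw hlw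

lemma shiftAndClose_inter_nonempty_iff (hl : ∀ v, IsUnitIntervalAt (f v) (l v))
    (hu : f u = Ioc 0 1) (hlu : l u = 0) (hno : ∀ v, f v ≠ Icc 0 1)
    (hinj : Function.Injective f) (hc : 0 < c)
    (hgap : ∀ v w, |l v - l w| ≠ 1 → c < |(|l v - l w| - 1)|) (hvw : v ≠ w) :
    (f v ∩ f w).Nonempty ↔ (shiftAndClose f l c u v ∩ shiftAndClose f l c u w).Nonempty := by
  by_cases h : |l v - l w| = 1
  · rcases (abs_eq zero_le_one).1 h with h | h
    · rw [inter_comm, inter_comm (shiftAndClose f l c u v)]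
      exact shiftAndClose_inter_nonempty_iff_of_eq_add_one hl hu hlu hno hinj hc hvw.symm
        (by linarith)
    · exact shiftAndClose_inter_nonempty_iff_of_eq_add_one hl hu hlu hno hinj hc hvw (by linarith)
  · obtain ⟨s, hs, hgv⟩ := exists_isUnitIntervalAt_shiftAndClose hl hlu hc.le v
    obtain ⟨t, ht, hgw⟩ := exists_isUnitIntervalAt_shiftAndClose hl hlu hc.le w
    refine (hl v).inter_nonempty_iff_of_abs_sub_lt (hl w) hgv hgw (lt_of_le_of_lt ?_ (hgap v w h))
    rw [show l v - s - (l w - t) - (l v - l w) = t - s by ring, abs_sub_le_iff]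
    constructor <;> linarith [hs.1, hs.2, ht.1, ht.2]

end ShiftAndClose

theorem stmt14 {V : Type*} [Fintype V] (G : SimpleGraph V) (f : V → Set ℝ)
    (hrep : IsRep G f) (hunit : ∀ v, IsUnitInterval (f v))
    (hinj : Function.Injective f)
    (u : V) (hu : f u = Set.Ioc 0 1)
    (hno : ∀ v : V, f v ≠ Set.Icc 0 1) :
    ∃ g : V → Set ℝ, IsRep G g ∧ (∀ v, IsUnitInterval (g v)) ∧
      {v | IsUnitOC (g v)}.ncard < {v | IsUnitOC (f v)}.ncard ∧
      {v | IsUnitCO (g v)}.ncard = {v | IsUnitCO (f v)}.ncard := by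
  choose l hl using fun v => (hunit v).exists_isUnitIntervalAt
  have hlu : l u = 0 := (hl u).left_unique (by simpa [hu] using isUnitIntervalAt_Ioc 0)
  obtain ⟨ε, hε, hgap⟩ := exists_pos_le_abs_of_ne_zero fun p : V × V => |l p.1 - l p.2| - 1
  refine ⟨shiftAndClose f l (ε / 2) u, fun v w hvw => (hrep v w hvw).trans ?_,
    isUnitInterval_shiftAndClose hunit, ?_, ?_⟩
  · refine shiftAndClose_inter_nonempty_iff hl hu hlu hno hinj (half_pos hε) (fun v w h => ?_) hvw
    exact (half_lt_self hε).trans_le (hgap (v, w) (sub_ne_zero.2 h))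
  · rw [setOf_isUnitOC_shiftAndClose]
    exact ncard_sdiff_singleton_lt_of_mem ⟨0, by rw [hu, zero_add]⟩ (toFinite _)
  · rw [setOf_isUnitCO_shiftAndClose hu]
end

section
/- A twin-free graph G is an almost-mixed unit interval graph if and only if G is a mixed unit interval graph and contains no induced subgraph from the families A, B, B', B'', C, C' described in the paper. Equivalently, for a twin-free mixed unit interval graph G: G fails to be almost-mixed iff some mixed unit interval representation of G with the minimum number of open-closed intervals (and subject to that, minimum number of closed-open intervals) contains both an open-closed and a closed-open interval in the same connected component. -/
open Set

lemma oc_not_cc {I : Set ℝ} (h : IsUnitOC I) : ¬ IsUnitCC I := by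
  rintro ⟨b, rfl⟩
  obtain ⟨a, ha⟩ := h
  rw [Set.ext_iff] at ha
  have hb : b ∈ Set.Ioc a (a + 1) := (ha b).mp ⟨le_refl b, by linarith⟩
  obtain ⟨hab, hba⟩ := hb
  have ht : (a + b) / 2 ∈ Set.Ioc a (a + 1) := ⟨by linarith, by linarith⟩
  have := ((ha _).mpr ht).1
  linarith

lemma oc_not_co {I : Set ℝ} (h : IsUnitOC I) : ¬ IsUnitCO I := by
  rintro ⟨b, rfl⟩
  obtain ⟨a, ha⟩ := h
  rw [Set.ext_iff] at ha
  have hb : b ∈ Set.Ioc a (a + 1) := (ha b).mp ⟨le_refl b, by linarith⟩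
  obtain ⟨hab, hba⟩ := hb
  have ht : (a + b) / 2 ∈ Set.Ioc a (a + 1) := ⟨by linarith, by linarith⟩
  have := ((ha _).mpr ht).1
  linarith

lemma oc_not_oo {I : Set ℝ} (h : IsUnitOC I) : ¬ IsUnitOO I := by
  rintro ⟨b, rfl⟩
  obtain ⟨a, ha⟩ := h
  rw [Set.ext_iff] at ha
  have hb : a + 1 ∈ Set.Ioo b (b + 1) := (ha (a + 1)).mpr ⟨by linarith, le_refl _⟩
  obtain ⟨hab, hba⟩ := hb
  have ht : (a + b) / 2 + 1 ∈ Set.Ioo b (b + 1) := ⟨by linarith, by linarith⟩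
  have := ((ha _).mp ht).2
  linarith

lemma oc_of_unit_not_acm {I : Set ℝ} (h : IsUnitInterval I)
    (h2 : ¬ (IsUnitCC I ∨ IsUnitOO I ∨ IsUnitCO I)) : IsUnitOC I := by
  rcases h with h | h | h | h
  · exact absurd (Or.inl h) h2
  · exact absurd (Or.inr (Or.inl h)) h2
  · exact absurd (Or.inr (Or.inr h)) h2
  · exact h

theorem stmt18 {V : Type*} [Fintype V] (G : SimpleGraph V)
    (htf : TwinFree G) (hmix : MixedUIG G) :
    (¬ AlmostMixedUIG G) ↔
    ∃ f : V → Set ℝ, IsRep G f ∧ (∀ v, IsUnitInterval (f v)) ∧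
      (∀ g : V → Set ℝ, IsRep G g → (∀ v, IsUnitInterval (g v)) →
        {v | IsUnitOC (f v)}.ncard ≤ {v | IsUnitOC (g v)}.ncard) ∧
      (∀ g : V → Set ℝ, IsRep G g → (∀ v, IsUnitInterval (g v)) →
        {v | IsUnitOC (g v)}.ncard = {v | IsUnitOC (f v)}.ncard →
        {v | IsUnitCO (f v)}.ncard ≤ {v | IsUnitCO (g v)}.ncard) ∧
      ∃ u d : V, IsUnitOC (f u) ∧ IsUnitCO (f d) ∧ G.Reachable u d := by
  classical
  constructor
  · intro hA
    -- Construct a lexicographically minimal representation f.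
    obtain ⟨f0, hrep0, hunit0⟩ := hmix
    set N1 : Set ℕ := {n | ∃ f : V → Set ℝ, (IsRep G f ∧ ∀ v, IsUnitInterval (f v)) ∧
      {v | IsUnitOC (f v)}.ncard = n} with hN1def
    have hN1 : N1.Nonempty := ⟨_, f0, ⟨hrep0, hunit0⟩, rfl⟩
    set N2 : Set ℕ := {n | ∃ f : V → Set ℝ, (IsRep G f ∧ ∀ v, IsUnitInterval (f v)) ∧
      {v | IsUnitOC (f v)}.ncard = sInf N1 ∧ {v | IsUnitCO (f v)}.ncard = n} with hN2def
    have hN2 : N2.Nonempty := by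
      obtain ⟨f1, hPf1, hf1⟩ := Nat.sInf_mem hN1
      exact ⟨_, f1, hPf1, hf1, rfl⟩
    obtain ⟨f, ⟨hrep, hunit⟩, hfoc, hfco⟩ := Nat.sInf_mem hN2
    have hmin1 : ∀ g : V → Set ℝ, IsRep G g → (∀ v, IsUnitInterval (g v)) →
        {v | IsUnitOC (f v)}.ncard ≤ {v | IsUnitOC (g v)}.ncard := by
      intro g hg hgu
      rw [hfoc]
      exact Nat.sInf_le ⟨g, ⟨hg, hgu⟩, rfl⟩
    have hmin2 : ∀ g : V → Set ℝ, IsRep G g → (∀ v, IsUnitInterval (g v)) →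
        {v | IsUnitOC (g v)}.ncard = {v | IsUnitOC (f v)}.ncard →
        {v | IsUnitCO (f v)}.ncard ≤ {v | IsUnitCO (g v)}.ncard := by
      intro g hg hgu hgeq
      rw [hfco]
      exact Nat.sInf_le ⟨g, ⟨hg, hgu⟩, by rw [hgeq, hfoc], rfl⟩
    refine ⟨f, hrep, hunit, hmin1, hmin2, ?_⟩
    -- there is an OC vertex, else f witnesses almost-mixed
    have hOCex : ∃ u : V, IsUnitOC (f u) := by
      by_contra h
      push_neg at h
      exact hA ⟨f, hrep, fun v => by
        rcases hunit v with hv | hv | hv | hv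
        · exact Or.inl hv
        · exact Or.inr (Or.inl hv)
        · exact Or.inr (Or.inr hv)
        · exact absurd hv (h v)⟩
    obtain ⟨u, hu⟩ := hOCex
    refine ⟨u, ?_⟩
    by_contra hno
    push_neg at hno
    -- no CO vertex reachable from u; flip the component of u.
    -- bounds
    have hsub : ∀ v, ∃ x : ℝ, f v ⊆ Set.Icc x (x + 1) := by
      intro v
      rcases hunit v with ⟨x, hx⟩ | ⟨x, hx⟩ | ⟨x, hx⟩ | ⟨x, hx⟩
      · exact ⟨x, hx.subset⟩
      · exact ⟨x, by rw [hx]; exact Set.Ioo_subset_Icc_self⟩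
      · exact ⟨x, by rw [hx]; exact Set.Ico_subset_Icc_self⟩
      · exact ⟨x, by rw [hx]; exact Set.Ioc_subset_Icc_self⟩
    choose xv hxv using hsub
    have hVne : (Finset.univ : Finset V).Nonempty := ⟨u, Finset.mem_univ u⟩
    set M : ℝ := Finset.univ.sup' hVne xv with hMdef
    have hM : ∀ v, xv v ≤ M := fun v => Finset.le_sup' xv (Finset.mem_univ v)
    set T : ℝ := 2 * M + 3 with hTdef
    set g : V → Set ℝ := fun v =>
      if G.Reachable u v then (fun x => T - x) '' f v else f v with hgdef
    have hgpos : ∀ v, G.Reachable u v → g v = (fun x => T - x) '' f v := by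
      intro v hv
      simp only [hgdef, if_pos hv]
    have hgneg : ∀ v, ¬ G.Reachable u v → g v = f v := by
      intro v hv
      simp only [hgdef, if_neg hv]
    have hinj : Function.Injective (fun x : ℝ => T - x) := by
      intro a b h
      simp only at h
      linarith
    have hglo : ∀ v, G.Reachable u v → ∀ x ∈ g v, M + 2 ≤ x := by
      intro v hv x hx
      rw [hgpos v hv] at hx
      obtain ⟨y, hy, rfl⟩ := hx
      have := (hxv v hy).2
      have := hM v
      simp only
      linarith
    have hghi : ∀ v, ¬ G.Reachable u v → ∀ x ∈ g v, x ≤ M + 1 := by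
      intro v hv x hx
      rw [hgneg v hv] at hx
      have := (hxv v hx).2
      have := hM v
      linarith
    have hrep_g : IsRep G g := by
      intro v w hvw
      by_cases hv : G.Reachable u v <;> by_cases hw : G.Reachable u w
      · rw [hgpos v hv, hgpos w hw]
        rw [← Set.image_inter hinj, Set.image_nonempty]
        exact hrep v w hvw
      · constructor
        · intro hadj
          exact absurd (hv.trans hadj.reachable) hw
        · rintro ⟨x, hx1, hx2⟩
          have := hglo v hv x hx1
          have := hghi w hw x hx2
          linarith
      · constructor
        · intro hadj
          exact absurd (hw.trans hadj.symm.reachable) hv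
        · rintro ⟨x, hx1, hx2⟩
          have := hghi v hv x hx1
          have := hglo w hw x hx2
          linarith
      · rw [hgneg v hv, hgneg w hw]
        exact hrep v w hvw
    have hgtype : ∀ v, G.Reachable u v →
        (IsUnitCC (f v) → IsUnitCC (g v)) ∧ (IsUnitOO (f v) → IsUnitOO (g v)) ∧
        (IsUnitCO (f v) → IsUnitOC (g v)) ∧ (IsUnitOC (f v) → IsUnitCO (g v)) := by
      intro v hv
      rw [hgpos v hv]
      refine ⟨?_, ?_, ?_, ?_⟩
      · rintro ⟨a, ha⟩
        refine ⟨T - a - 1, ?_⟩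
        rw [ha, Set.image_const_sub_Icc]
        congr 1 <;> ring
      · rintro ⟨a, ha⟩
        refine ⟨T - a - 1, ?_⟩
        rw [ha, Set.image_const_sub_Ioo]
        congr 1 <;> ring
      · rintro ⟨a, ha⟩
        refine ⟨T - a - 1, ?_⟩
        rw [ha, Set.image_const_sub_Ico]
        congr 1 <;> ring
      · rintro ⟨a, ha⟩
        refine ⟨T - a - 1, ?_⟩
        rw [ha, Set.image_const_sub_Ioc]
        congr 1 <;> ring
    have hunit_g : ∀ v, IsUnitInterval (g v) := by
      intro v
      by_cases hv : G.Reachable u v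
      · obtain ⟨h1, h2, h3, h4⟩ := hgtype v hv
        rcases hunit v with h | h | h | h
        · exact Or.inl (h1 h)
        · exact Or.inr (Or.inl (h2 h))
        · exact Or.inr (Or.inr (Or.inr (h3 h)))
        · exact Or.inr (Or.inr (Or.inl (h4 h)))
      · rw [hgneg v hv]
        exact hunit v
    -- the OC set of g loses the entire component of u
    have hOCg : {v | IsUnitOC (g v)} = {v | IsUnitOC (f v)} \ {v | G.Reachable u v} := by
      ext v
      simp only [Set.mem_setOf_eq, Set.mem_diff, Set.mem_setOf_eq]
      by_cases hv : G.Reachable u v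
      · obtain ⟨h1, h2, h3, h4⟩ := hgtype v hv
        constructor
        · intro hgv
          exfalso
          rcases hunit v with h | h | h | h
          · exact oc_not_cc hgv (h1 h)
          · exact oc_not_oo hgv (h2 h)
          · exact hno v hu h hv
          · exact oc_not_co hgv (h4 h)
        · rintro ⟨_, hc⟩
          exact absurd hv hc
      · rw [hgneg v hv]
        exact ⟨fun h => ⟨h, hv⟩, fun h => h.1⟩
    have hssub : {v | IsUnitOC (g v)} ⊂ {v | IsUnitOC (f v)} := by
      rw [hOCg]
      refine ⟨Set.diff_subset, fun hsub => ?_⟩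
      have hu' : u ∈ {v | IsUnitOC (f v)} := hu
      have := hsub hu'
      exact this.2 (SimpleGraph.Reachable.refl u)
    have hlt : {v | IsUnitOC (g v)}.ncard < {v | IsUnitOC (f v)}.ncard :=
      Set.ncard_lt_ncard hssub (Set.toFinite _)
    have := hmin1 g hrep_g hunit_g
    omega
  · rintro ⟨f, hrep, hunit, hmin1, hmin2, u, d, hu, hd, hud⟩ ⟨g, hgrep, hgalm⟩
    have hgunit : ∀ v, IsUnitInterval (g v) := by
      intro v
      rcases hgalm v with h | h | h
      · exact Or.inl h
      · exact Or.inr (Or.inl h)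
      · exact Or.inr (Or.inr (Or.inl h))
    have hgempty : {v | IsUnitOC (g v)} = ∅ := by
      ext v
      simp only [Set.mem_setOf_eq, Set.mem_empty_iff_false, iff_false]
      intro h
      rcases hgalm v with h' | h' | h'
      · exact oc_not_cc h h'
      · exact oc_not_oo h h'
      · exact oc_not_co h h'
    have h1 := hmin1 g hgrep hgunit
    rw [hgempty, Set.ncard_empty] at h1
    have h2 : {v | IsUnitOC (f v)} = ∅ :=
      (Set.ncard_eq_zero (Set.toFinite _)).mp (Nat.le_zero.mp h1)
    have : u ∈ {v | IsUnitOC (f v)} := hu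
    rw [h2] at this
    exact this
end
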